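/- arXiv:2012.10938 — 2 statements merged into one kernel-verified Lean document; each statement's English description precedes it below -/
import Mathlib

section
/- Pizza Theorem (fair division among n/2 people): Let D be a disk, P a point of D, and n a multiple of 4. Divide D into 2n slices by n equiangular lines through P, numbering the slices 1,…,2n clockwise. For each k with 1 ≤ k ≤ n/2, the four slices numbered k, k + n/2, k + n, and k + 3n/2 have total area equal to (2/n) times the area of D. Consequently the 2n slices can be partitioned into n/2 groups of four slices each, all groups having equal total area. -/
open Real MeasureTheory

/-- The closed angular sector at `P` of directions with angles in `[a, b]`. -/
def angularSector (P : ℂ) (a b : ℝ) : Set ℂ :=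
  {z : ℂ | ∃ t : ℝ, 0 ≤ t ∧ ∃ φ : ℝ, a ≤ φ ∧ φ ≤ b ∧
    z = P + (t : ℂ) * Complex.exp ((φ : ℝ) * Complex.I)}

/-- Slice number `j` (for `1 ≤ j ≤ 2n`) of the disk of radius `R` about `O`, cut by the
`n` equiangular lines through `P` with base direction `θ`. -/
def pizzaSlice (O P : ℂ) (R θ : ℝ) (n j : ℕ) : Set ℂ :=
  Metric.closedBall O R ∩
    angularSector P (θ + ((j - 1 : ℕ) : ℝ) * π / n) (θ + (j : ℝ) * π / n)

/-!
In polar coordinates about `P`, the part of the disk between the directions `a` and `b` has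
area `∫_a^b ρ(φ)² / 2 dφ`, where `ρ(φ)` is the distance from `P` to the circle in direction `φ`.
If `Q` is the centre seen from `P` and `c(φ)` the component of `Q` along direction `φ`, then
`ρ(φ) = c(φ) + √(c(φ)² + R² - ‖Q‖²)`. As `c(φ + π) = -c(φ)` and `c(φ)² + c(φ + π/2)² = ‖Q‖²`,
the squares of `ρ` at four directions a quarter turn apart add up to `4R²`. The angular ranges
of the slices `k, k + n/2, k + n, k + 3n/2` are one interval of width `π/n` shifted by quarter
turns, so their total area is the integral of `2R²` over an angle `π/n`.
-/

open Complex (I)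
open Set

noncomputable section

def dirComponent (Q : ℂ) (φ : ℝ) : ℝ := Q.re * cos φ + Q.im * sin φ

/-- The nonnegative root `t` of `‖t * exp (φ * I) - Q‖ = R` when `‖Q‖ ≤ R`: the length of the
ray from `0` in direction `φ` inside `closedBall Q R`. -/
def rayLength (R : ℝ) (Q : ℂ) (φ : ℝ) : ℝ :=
  dirComponent Q φ + √(dirComponent Q φ ^ 2 + R ^ 2 - ‖Q‖ ^ 2)

end

section RayLength

variable {R : ℝ} {Q : ℂ}

lemma dirComponent_add_pi (Q : ℂ) (φ : ℝ) : dirComponent Q (φ + π) = -dirComponent Q φ := by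
  simp only [dirComponent, cos_add_pi, sin_add_pi]; ring

lemma dirComponent_sq_add_dirComponent_add_pi_div_two_sq (Q : ℂ) (φ : ℝ) :
    dirComponent Q φ ^ 2 + dirComponent Q (φ + π / 2) ^ 2 = ‖Q‖ ^ 2 := by
  rw [Complex.sq_norm, Complex.normSq_apply]
  simp only [dirComponent, cos_add_pi_div_two, sin_add_pi_div_two]
  linear_combination (Q.re ^ 2 + Q.im ^ 2) * sin_sq_add_cos_sq φ

lemma dirComponent_exp_neg_mul (Q : ℂ) (γ φ : ℝ) :
    dirComponent (Complex.exp (↑(-γ) * I) * Q) φ = dirComponent Q (γ + φ) := by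
  simp only [dirComponent, Complex.mul_re, Complex.mul_im, Complex.exp_ofReal_mul_I_re,
    Complex.exp_ofReal_mul_I_im, cos_neg, sin_neg, cos_add, sin_add]
  ring

lemma rayLength_exp_neg_mul (R : ℝ) (Q : ℂ) (γ φ : ℝ) :
    rayLength R (Complex.exp (↑(-γ) * I) * Q) φ = rayLength R Q (γ + φ) := by
  simp only [rayLength, dirComponent_exp_neg_mul, norm_mul, Complex.norm_exp_ofReal_mul_I,
    one_mul]

lemma continuous_rayLength (R : ℝ) (Q : ℂ) : Continuous (rayLength R Q) := by
  unfold rayLength dirComponent; fun_prop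

lemma sq_sqrt_dirComponent_sq_add_sub (hQ : ‖Q‖ ≤ R) (φ : ℝ) :
    √(dirComponent Q φ ^ 2 + R ^ 2 - ‖Q‖ ^ 2) ^ 2 = dirComponent Q φ ^ 2 + R ^ 2 - ‖Q‖ ^ 2 :=
  Real.sq_sqrt (by nlinarith [norm_nonneg Q, sq_nonneg (dirComponent Q φ)])

lemma dirComponent_le_sqrt (hQ : ‖Q‖ ≤ R) (φ : ℝ) :
    dirComponent Q φ ≤ √(dirComponent Q φ ^ 2 + R ^ 2 - ‖Q‖ ^ 2) :=
  Real.le_sqrt_of_sq_le (by nlinarith [norm_nonneg Q])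

lemma rayLength_nonneg (hQ : ‖Q‖ ≤ R) (φ : ℝ) : 0 ≤ rayLength R Q φ := by
  have h := dirComponent_le_sqrt hQ (φ + π)
  rw [dirComponent_add_pi, neg_sq] at h
  unfold rayLength; linarith

lemma sum_rayLength_sq (hQ : ‖Q‖ ≤ R) (φ : ℝ) :
    rayLength R Q φ ^ 2 + rayLength R Q (φ + π / 2) ^ 2 + rayLength R Q (φ + π) ^ 2
      + rayLength R Q (φ + 3 * π / 2) ^ 2 = 4 * R ^ 2 := by
  have h₁ := sq_sqrt_dirComponent_sq_add_sub hQ φ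
  have h₂ := sq_sqrt_dirComponent_sq_add_sub hQ (φ + π / 2)
  rw [show φ + 3 * π / 2 = φ + π / 2 + π by ring]
  simp only [rayLength, dirComponent_add_pi, neg_sq]
  linear_combination
    2 * h₁ + 2 * h₂ + 4 * dirComponent_sq_add_dirComponent_add_pi_div_two_sq Q φ

lemma sum_ofReal_rayLength_sq_div_two (hQ : ‖Q‖ ≤ R) (φ : ℝ) :
    ENNReal.ofReal (rayLength R Q φ ^ 2 / 2) + ENNReal.ofReal (rayLength R Q (φ + π / 2) ^ 2 / 2)
      + ENNReal.ofReal (rayLength R Q (φ + π) ^ 2 / 2)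
      + ENNReal.ofReal (rayLength R Q (φ + 3 * π / 2) ^ 2 / 2) = ENNReal.ofReal (2 * R ^ 2) := by
  rw [← ENNReal.ofReal_add (by positivity) (by positivity),
    ← ENNReal.ofReal_add (by positivity) (by positivity),
    ← ENNReal.ofReal_add (by positivity) (by positivity)]
  congr 1
  linarith [sum_rayLength_sq hQ φ]

lemma norm_ofReal_mul_exp_sub_sq (t φ : ℝ) (Q : ℂ) :
    ‖t * Complex.exp (φ * I) - Q‖ ^ 2 = t ^ 2 - 2 * t * dirComponent Q φ + ‖Q‖ ^ 2 := by
  simp only [Complex.sq_norm, Complex.normSq_apply, Complex.sub_re, Complex.sub_im,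
    Complex.re_ofReal_mul, Complex.im_ofReal_mul, Complex.exp_ofReal_mul_I_re,
    Complex.exp_ofReal_mul_I_im, dirComponent]
  linear_combination t ^ 2 * sin_sq_add_cos_sq φ

lemma ofReal_mul_exp_mem_closedBall_iff (hQ : ‖Q‖ ≤ R) {t : ℝ} (ht : 0 ≤ t) (φ : ℝ) :
    t * Complex.exp (φ * I) ∈ Metric.closedBall Q R ↔ t ≤ rayLength R Q φ := by
  have hR : 0 ≤ R := (norm_nonneg Q).trans hQ
  have hs := sq_sqrt_dirComponent_sq_add_sub hQ φ
  have hc := dirComponent_le_sqrt hQ φ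
  rw [Metric.mem_closedBall, dist_eq_norm, ← sq_le_sq₀ (norm_nonneg _) hR,
    norm_ofReal_mul_exp_sub_sq, rayLength]
  constructor <;> intro h
  · nlinarith [Real.sqrt_nonneg (dirComponent Q φ ^ 2 + R ^ 2 - ‖Q‖ ^ 2)]
  · nlinarith

end RayLength

section AngularSector

lemma Complex.arg_ofReal_mul_exp_mul_I {r φ : ℝ} (hr : 0 < r) (hφ : φ ∈ Ioc (-π) π) :
    Complex.arg (r * Complex.exp (φ * I)) = φ := by
  rw [Complex.arg_real_mul _ hr, Complex.arg_exp_mul_I, toIocMod_eq_self]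
  simpa [two_mul, ← add_assoc] using hφ

variable {a b : ℝ}

lemma angularSector_zero_eq (ha : -π < a) (hb : b ≤ π) (hab : a ≤ b) :
    angularSector 0 a b = insert 0 (Complex.arg ⁻¹' Icc a b) := by
  ext z
  simp only [angularSector, zero_add, mem_ofPred_eq, mem_insert_iff, mem_preimage, mem_Icc]
  constructor
  · rintro ⟨t, ht, φ, hφa, hφb, rfl⟩
    rcases ht.eq_or_lt with rfl | ht
    · simp
    · rw [Complex.arg_ofReal_mul_exp_mul_I ht ⟨by linarith, by linarith⟩]
      exact Or.inr ⟨hφa, hφb⟩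
  · rintro (rfl | harg)
    · exact ⟨0, le_rfl, a, le_rfl, hab, by simp⟩
    · exact ⟨‖z‖, norm_nonneg z, z.arg, harg.1, harg.2, (Complex.norm_mul_exp_arg_mul_I z).symm⟩

lemma measurableSet_angularSector_zero (ha : -π < a) (hb : b ≤ π) (hab : a ≤ b) :
    MeasurableSet (angularSector 0 a b) := by
  rw [angularSector_zero_eq ha hb hab]
  exact (measurableSet_Icc.preimage Complex.measurable_arg).insert 0

lemma ofReal_mul_exp_mem_angularSector_zero_iff (ha : -π < a) (hb : b ≤ π) (hab : a ≤ b)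
    {r φ : ℝ} (hr : 0 < r) (hφ : φ ∈ Ioc (-π) π) :
    r * Complex.exp (φ * I) ∈ angularSector 0 a b ↔ φ ∈ Icc a b := by
  rw [angularSector_zero_eq ha hb hab, mem_insert_iff, mem_preimage,
    Complex.arg_ofReal_mul_exp_mul_I hr hφ, or_iff_right]
  exact mul_ne_zero (by exact_mod_cast hr.ne') (Complex.exp_ne_zero _)

lemma preimage_angularSector (P : ℂ) (γ a b : ℝ) :
    (fun z => P + Complex.exp (γ * I) * z) ⁻¹' angularSector P a b
      = angularSector 0 (a - γ) (b - γ) := by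
  ext z
  simp only [angularSector, mem_preimage, mem_ofPred_eq, zero_add, add_right_inj]
  constructor
  · rintro ⟨t, ht, φ, hφa, hφb, h⟩
    refine ⟨t, ht, φ - γ, by linarith, by linarith,
      mul_left_cancel₀ (Complex.exp_ne_zero (γ * I)) ?_⟩
    rw [h, mul_left_comm, ← Complex.exp_add]; push_cast; ring_nf
  · rintro ⟨t, ht, φ, hφa, hφb, rfl⟩
    refine ⟨t, ht, φ + γ, by linarith, by linarith, ?_⟩
    rw [mul_left_comm, ← Complex.exp_add]; push_cast; ring_nf

end AngularSector

lemma preimage_closedBall (P O : ℂ) (R γ : ℝ) :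
    (fun z => P + Complex.exp (γ * I) * z) ⁻¹' Metric.closedBall O R
      = Metric.closedBall (Complex.exp (↑(-γ) * I) * (O - P)) R := by
  ext z
  have hexp : Complex.exp (γ * I) * Complex.exp (↑(-γ) * I) = 1 := by
    rw [← Complex.exp_add]; push_cast; simp
  have : P + Complex.exp (γ * I) * z - O
      = Complex.exp (γ * I) * (z - Complex.exp (↑(-γ) * I) * (O - P)) := by
    linear_combination (O - P) * hexp
  simp only [mem_preimage, Metric.mem_closedBall, dist_eq_norm, this, norm_mul,
    Complex.norm_exp_ofReal_mul_I, one_mul]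

lemma measurePreserving_add_exp_mul (P : ℂ) (γ : ℝ) :
    MeasurePreserving (fun z => P + Complex.exp (γ * I) * z) := by
  have hrot : MeasurePreserving (fun z : ℂ => Complex.exp (γ * I) * z) := by
    convert (rotation (Circle.exp γ)).measurePreserving using 1
    ext z; simp
  exact (measurePreserving_add_left volume P).comp hrot

lemma measurableEmbedding_add_exp_mul (P : ℂ) (γ : ℝ) :
    MeasurableEmbedding (fun z => P + Complex.exp (γ * I) * z) :=
  (measurableEmbedding_addLeft P).comp
    (Homeomorph.mulLeft₀ _ (Complex.exp_ne_zero _)).measurableEmbedding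

lemma setLIntegral_Ioc_zero_ofReal {c : ℝ} (hc : 0 ≤ c) :
    ∫⁻ r in Ioc 0 c, ENNReal.ofReal r = ENNReal.ofReal (c ^ 2 / 2) := by
  rw [← ofReal_integral_eq_lintegral_ofReal]
  · rw [← intervalIntegral.integral_of_le hc, integral_id]; ring_nf
  · exact (intervalIntegrable_iff_integrableOn_Ioc_of_le hc).mp
      intervalIntegral.intervalIntegrable_id
  · exact (ae_restrict_iff' measurableSet_Ioc).mpr
      (Filter.Eventually.of_forall fun r hr => hr.1.le)

def polarSubgraph (s : Set ℝ) (f : ℝ → ℝ) : Set (ℝ × ℝ) := {p | p.2 ∈ s ∧ p.1 ≤ f p.2}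

lemma measurableSet_polarSubgraph {s : Set ℝ} (hs : MeasurableSet s) {f : ℝ → ℝ}
    (hf : Measurable f) : MeasurableSet (polarSubgraph s f) :=
  (hs.preimage measurable_snd).inter (measurableSet_le measurable_fst (hf.comp measurable_snd))

lemma lintegral_Ioi_indicator_polarSubgraph {s : Set ℝ} {f : ℝ → ℝ}
    (hf₀ : ∀ φ ∈ s, 0 ≤ f φ) (φ : ℝ) :
    ∫⁻ r in Ioi 0, (polarSubgraph s f).indicator (fun p => ENNReal.ofReal p.1) (r, φ)
      = s.indicator (fun φ => ENNReal.ofReal (f φ ^ 2 / 2)) φ := by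
  by_cases hφ : φ ∈ s
  · have h : ∀ r, (polarSubgraph s f).indicator (fun p => ENNReal.ofReal p.1) (r, φ)
        = (Iic (f φ)).indicator ENNReal.ofReal r := by
      intro r; simp only [indicator, polarSubgraph, mem_ofPred_eq, mem_Iic, hφ, true_and]
    simp_rw [h, indicator_of_mem hφ]
    rw [lintegral_indicator measurableSet_Iic, Measure.restrict_restrict measurableSet_Iic,
      Iic_inter_Ioi, setLIntegral_Ioc_zero_ofReal (hf₀ φ hφ)]
  · have h : ∀ r, (polarSubgraph s f).indicator (fun p => ENNReal.ofReal p.1) (r, φ) = 0 :=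
      fun r => indicator_of_notMem (fun h => hφ h.1) _
    simp [h, indicator_of_notMem hφ]

theorem volume_eq_setLIntegral_of_polar {S : Set ℂ} (hS : MeasurableSet S) {f : ℝ → ℝ}
    (hf : Measurable f) {a b : ℝ} (ha : -π < a) (hb : b < π) (hf₀ : ∀ φ ∈ Icc a b, 0 ≤ f φ)
    (hmem : ∀ r : ℝ, 0 < r → ∀ φ ∈ Ioo (-π) π,
      (r * Complex.exp (φ * I) ∈ S ↔ φ ∈ Icc a b ∧ r ≤ f φ)) :
    volume S = ∫⁻ φ in Icc a b, ENNReal.ofReal (f φ ^ 2 / 2) := by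
  calc volume S = ∫⁻ z, S.indicator 1 z := (lintegral_indicator_one hS).symm
    _ = ∫⁻ p in polarCoord.target,
          ENNReal.ofReal p.1 • S.indicator 1 (Complex.polarCoord.symm p) :=
      (Complex.lintegral_comp_polarCoord_symm _).symm
    _ = ∫⁻ p in Ioi 0 ×ˢ Ioo (-π) π,
          (polarSubgraph (Icc a b) f).indicator (fun p => ENNReal.ofReal p.1) p := by
      refine setLIntegral_congr_fun polarCoord.open_target.measurableSet fun p hp => ?_
      have hpS := hmem p.1 hp.1 p.2 hp.2
      have hsymm : Complex.polarCoord.symm p = p.1 * Complex.exp (p.2 * I) := by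
        simp [Complex.exp_mul_I]
      rw [hsymm]
      by_cases hpW : p ∈ polarSubgraph (Icc a b) f
      · simp [indicator_of_mem hpW, indicator_of_mem (hpS.mpr hpW)]
      · simp [indicator_of_notMem hpW, indicator_of_notMem (mt hpS.mp hpW)]
    _ = ∫⁻ φ in Ioo (-π) π, ∫⁻ r in Ioi 0,
          (polarSubgraph (Icc a b) f).indicator (fun p => ENNReal.ofReal p.1) (r, φ) := by
      rw [Measure.volume_eq_prod, ← Measure.prod_restrict, lintegral_prod_symm]
      exact (measurable_fst.ennreal_ofReal.indicator
        (measurableSet_polarSubgraph measurableSet_Icc hf)).aemeasurable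
    _ = ∫⁻ φ in Icc a b, ENNReal.ofReal (f φ ^ 2 / 2) := by
      simp_rw [lintegral_Ioi_indicator_polarSubgraph hf₀]
      rw [lintegral_indicator measurableSet_Icc, Measure.restrict_restrict measurableSet_Icc,
        inter_eq_left.mpr (Icc_subset_Ioo ha hb)]

lemma volume_closedBall_inter_angularSector_zero {Q : ℂ} {R a b : ℝ} (hQ : ‖Q‖ ≤ R)
    (ha : -π < a) (hb : b < π) (hab : a ≤ b) :
    volume (Metric.closedBall Q R ∩ angularSector 0 a b)
      = ∫⁻ φ in Icc a b, ENNReal.ofReal (rayLength R Q φ ^ 2 / 2) :=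
  volume_eq_setLIntegral_of_polar
    (measurableSet_closedBall.inter (measurableSet_angularSector_zero ha hb.le hab))
    (continuous_rayLength R Q).measurable ha hb (fun φ _ => rayLength_nonneg hQ φ)
    fun r hr φ hφ => by
      rw [mem_inter_iff, ofReal_mul_exp_mem_closedBall_iff hQ hr.le,
        ofReal_mul_exp_mem_angularSector_zero_iff ha hb.le hab hr (Ioo_subset_Ioc_self hφ),
        and_comm]

lemma volume_closedBall_inter_angularSector {O P : ℂ} {R a b : ℝ}
    (hP : P ∈ Metric.closedBall O R) (hab : a ≤ b) (hba : b - a < π) :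
    volume (Metric.closedBall O R ∩ angularSector P a b)
      = ∫⁻ φ in Icc 0 (b - a), ENNReal.ofReal (rayLength R (O - P) (a + φ) ^ 2 / 2) := by
  have hQ : ‖Complex.exp (↑(-a) * I) * (O - P)‖ ≤ R := by
    rwa [norm_mul, Complex.norm_exp_ofReal_mul_I, one_mul, ← dist_eq_norm, dist_comm]
  -- the isometry `z ↦ P + exp (a * I) * z` moves the sector into the range of polar coordinates
  rw [← (measurePreserving_add_exp_mul P a).measure_preimage_emb
      (measurableEmbedding_add_exp_mul P a),
    preimage_inter, preimage_closedBall, preimage_angularSector, sub_self,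
    volume_closedBall_inter_angularSector_zero hQ (neg_lt_zero.mpr pi_pos) hba (by linarith)]
  simp_rw [rayLength_exp_neg_mul]

lemma volume_pizzaSlice {O P : ℂ} {R : ℝ} (hP : P ∈ Metric.closedBall O R) (θ : ℝ) {n j : ℕ}
    (hn : 2 ≤ n) (hj : 1 ≤ j) :
    volume (pizzaSlice O P R θ n j) = ∫⁻ φ in Icc 0 (π / n),
      ENNReal.ofReal (rayLength R (O - P) (θ + (j - 1) * π / n + φ) ^ 2 / 2) := by
  have hcast : ((j - 1 : ℕ) : ℝ) = j - 1 := by rw [Nat.cast_sub hj, Nat.cast_one]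
  have hwidth : θ + j * π / n - (θ + ((j - 1 : ℕ) : ℝ) * π / n) = π / n := by
    rw [hcast]; ring
  have hπn : π / n < π := div_lt_self pi_pos (by exact_mod_cast hn)
  rw [pizzaSlice, volume_closedBall_inter_angularSector hP
      (by linarith [div_nonneg pi_pos.le (Nat.cast_nonneg n)]) (by linarith), hwidth, hcast]

theorem pizza_stmt5_general
    (O P : ℂ) (R : ℝ) (hP : P ∈ Metric.closedBall O R)
    (n : ℕ) (hmul : 4 ∣ n) (θ : ℝ) :
    ∀ k : ℕ, 1 ≤ k → k ≤ n / 2 →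
      volume (pizzaSlice O P R θ n k) +
      volume (pizzaSlice O P R θ n (k + n / 2)) +
      volume (pizzaSlice O P R θ n (k + n)) +
      volume (pizzaSlice O P R θ n (k + 3 * n / 2)) =
      ENNReal.ofReal (2 / n * (π * R ^ 2)) := by
  intro k hk hkn
  obtain ⟨m, rfl⟩ := hmul
  have hn : 2 ≤ 4 * m := by omega
  have hm : (0 : ℝ) < m := by exact_mod_cast (by omega : 0 < m)
  have hQ : ‖O - P‖ ≤ R := by rwa [← dist_eq_norm, dist_comm]
  have hmeas : ∀ c, Measurable fun φ => ENNReal.ofReal (rayLength R (O - P) (c + φ) ^ 2 / 2) :=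
    fun c => ((continuous_rayLength R (O - P)).comp (continuous_const_add c)).measurable.pow_const 2
      |>.div_const 2 |>.ennreal_ofReal
  set α := θ + ((k : ℝ) - 1) * π / (4 * m : ℕ)
  have h₂ : θ + ((k + 2 * m : ℕ) - 1 : ℝ) * π / (4 * m : ℕ) = α + π / 2 := by
    simp only [α]; push_cast; field_simp; ring
  have h₄ : θ + ((k + 4 * m : ℕ) - 1 : ℝ) * π / (4 * m : ℕ) = α + π := by
    simp only [α]; push_cast; field_simp; ring
  have h₆ : θ + ((k + 6 * m : ℕ) - 1 : ℝ) * π / (4 * m : ℕ) = α + 3 * π / 2 := by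
    simp only [α]; push_cast; field_simp; ring
  rw [show 4 * m / 2 = 2 * m by omega, show 3 * (4 * m) / 2 = 6 * m by omega,
    volume_pizzaSlice hP θ hn hk, volume_pizzaSlice hP θ hn (by omega : 1 ≤ k + 2 * m),
    volume_pizzaSlice hP θ hn (by omega : 1 ≤ k + 4 * m),
    volume_pizzaSlice hP θ hn (by omega : 1 ≤ k + 6 * m), h₂, h₄, h₆,
    ← lintegral_add_right _ (hmeas _), ← lintegral_add_right _ (hmeas _),
    ← lintegral_add_right _ (hmeas _),
    setLIntegral_congr_fun (g := fun _ => ENNReal.ofReal (2 * R ^ 2)) measurableSet_Icc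
      fun φ _ => ?_, setLIntegral_const, Real.volume_Icc, ← ENNReal.ofReal_mul (by positivity)]
  · congr 1; push_cast; field_simp; ring
  · rw [add_right_comm α _ φ, add_right_comm α _ φ, add_right_comm α _ φ]
    exact sum_ofReal_rayLength_sq_div_two hQ (α + φ)

/-- Pizza Theorem, fair division among `n/2` people: with the disk divided
into `2n` slices by `n` equiangular lines through `P ∈ D` (`n` a positive multiple of 4),
for each `1 ≤ k ≤ n/2` the four slices numbered `k`, `k + n/2`, `k + n`, `k + 3n/2`
have total area `(2/n)` times the area of the disk. -/
theorem pizza_stmt5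
    (O P : ℂ) (R : ℝ) (hR : 0 < R) (hP : P ∈ Metric.closedBall O R)
    (n : ℕ) (hn : 0 < n) (hmul : 4 ∣ n) (θ : ℝ) :
    ∀ k : ℕ, 1 ≤ k → k ≤ n / 2 →
      volume (pizzaSlice O P R θ n k) +
      volume (pizzaSlice O P R θ n (k + n / 2)) +
      volume (pizzaSlice O P R θ n (k + n)) +
      volume (pizzaSlice O P R θ n (k + 3 * n / 2)) =
      ENNReal.ofReal (2 / n * (π * R ^ 2)) :=
  pizza_stmt5_general O P R hP n hmul θ
end

section
/- Annulus lemma for a boundary point: Let D and D̃ be concentric closed disks centered at O with radii R > r > 0, B = D \ int(D̃) the annulus, and P a point on the boundary circle of D̃ (dist(O,P) = r). Let n ≥ 4 be even and draw n lines through P at equal angles π/n, giving 2n angular sectors at P numbered consecutively clockwise. Then for every 1 ≤ k ≤ n, the sum of the areas of the intersection of B with the k-th sector and of the intersection of B with the (k+n)-th sector equals (1/n)·π(R² − r²). -/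
open Real MeasureTheory

/-!
Move `P` to the origin and rotate, then compute areas in polar coordinates `(t, φ)` about `P`.
Since `P` lies on the inner circle, the ray from `P` in direction `u` runs inside the annulus for
`max(2c, 0) ≤ t ≤ c + √(c² + R² - r²)`, where `c = ⟪u, O - P⟫`; the opposite ray has `c` replaced
by `-c`. The two radial integrals `∫ t dt` add up to `R² - r²` for every direction, so the areas of
two opposite sectors of aperture `δ` add up to `δ (R² - r²)`.
-/

open Set Metric
open scoped ENNReal RealInnerProductSpace

theorem measurableSet_angularSector (P : ℂ) (a b : ℝ) :
    MeasurableSet (angularSector P a b) := by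
  have himage : angularSector P a b =
      (fun p : ℝ × ℝ => P + (p.1 : ℂ) * Complex.exp (p.2 * Complex.I)) '' (Ici 0 ×ˢ Icc a b) := by
    ext z
    simp only [angularSector, mem_ofPred_eq, mem_image, mem_prod, mem_Ici, mem_Icc, Prod.exists]
    constructor
    · rintro ⟨t, ht, φ, ha, hb, rfl⟩
      exact ⟨t, φ, ⟨ht, ha, hb⟩, rfl⟩
    · rintro ⟨t, φ, ⟨ht, ha, hb⟩, rfl⟩
      exact ⟨t, ht, φ, ha, hb, rfl⟩
  obtain ⟨K, hK, hKs⟩ : IsSigmaCompact (angularSector P a b) := by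
    rw [himage]
    exact (isSigmaCompact_univ.of_isClosed_subset (isClosed_Ici.prod isClosed_Icc)
      (subset_univ _)).image (by fun_prop)
  exact hKs ▸ .iUnion fun n => (hK n).measurableSet

theorem Complex.polarCoord_symm_eq_ofReal_mul_exp (p : ℝ × ℝ) :
    Complex.polarCoord.symm p = p.1 * Complex.exp (p.2 * Complex.I) := by
  rw [Complex.polarCoord_symm_apply, Complex.exp_mul_I, ← Complex.ofReal_cos, ← Complex.ofReal_sin]

theorem polarCoord_symm_mem_angularSector_iff {p : ℝ × ℝ} (hp : p ∈ polarCoord.target)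
    {a b : ℝ} (ha : -π ≤ a) (hb : b ≤ π) :
    Complex.polarCoord.symm p ∈ angularSector 0 a b ↔ p.2 ∈ Icc a b := by
  obtain ⟨ht, hφ⟩ : 0 < p.1 ∧ p.2 ∈ Ioo (-π) π := hp
  rw [Complex.polarCoord_symm_eq_ofReal_mul_exp]
  refine ⟨?_, fun h => ⟨p.1, ht.le, p.2, h.1, h.2, (zero_add _).symm⟩⟩
  rintro ⟨t, ht', ψ, hψa, hψb, h⟩
  rw [zero_add] at h
  have hpt : p.1 = t := by
    simpa [Complex.norm_exp_ofReal_mul_I, abs_of_pos ht, abs_of_nonneg ht'] using congrArg norm h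
  rw [hpt] at h
  have hexp : Circle.exp p.2 = Circle.exp ψ := Subtype.ext <| by
    simpa [Circle.coe_exp] using mul_left_cancel₀ (Complex.ofReal_ne_zero.2 (hpt ▸ ht).ne') h
  have hinj : InjOn Circle.exp {p.2, ψ} := Circle.exp_injOn_of_forall_sub_mem_Ioo <| by
    simp only [mem_insert_iff, mem_singleton_iff, mem_Ioo]
    rintro x (rfl | rfl) y (rfl | rfl) <;> constructor <;> linarith [hφ.1, hφ.2]
  rw [hinj (by simp) (by simp) hexp]
  exact ⟨hψa, hψb⟩

theorem exp_mul_mem_angularSector_zero {z : ℂ} {a b : ℝ} (β : ℝ) (hz : z ∈ angularSector 0 a b) :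
    Complex.exp (β * Complex.I) * z ∈ angularSector 0 (a + β) (b + β) := by
  obtain ⟨t, ht, φ, ha, hb, rfl⟩ := hz
  refine ⟨t, ht, φ + β, by linarith, by linarith, ?_⟩
  push_cast
  rw [add_mul, Complex.exp_add]
  ring

theorem preimage_exp_mul_sub_angularSector (P : ℂ) (a b β : ℝ) :
    (fun z => Complex.exp (β * Complex.I) * (z - P)) ⁻¹' angularSector 0 (a + β) (b + β) =
      angularSector P a b := by
  have hsector_sub : ∀ z, z ∈ angularSector P a b ↔ z - P ∈ angularSector 0 a b := by
    simp [angularSector, sub_eq_iff_eq_add']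
  ext z
  rw [mem_preimage, hsector_sub]
  refine ⟨fun h => ?_, exp_mul_mem_angularSector_zero β⟩
  have h' := exp_mul_mem_angularSector_zero (-β) h
  rwa [← mul_assoc, ← Complex.exp_add, Complex.ofReal_neg, neg_mul, neg_add_cancel,
    Complex.exp_zero, one_mul, add_neg_cancel_right, add_neg_cancel_right] at h'

/-- `∫ t dt` over `max (2c) 0 ≤ t ≤ c + √(c² + K)`, the range in which the ray `t ↦ t • u` stays in
the annulus `r ≤ ‖z - w‖ ≤ R` when `‖w‖ = r`, `c = ⟪u, w⟫` and `K = R² - r²`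
(see `norm_smul_sub_mem_Icc_iff`). -/
noncomputable def rayArea (c K : ℝ) : ℝ :=
  ((c + √(c ^ 2 + K)) ^ 2 - max (2 * c) 0 ^ 2) / 2

section rayArea

variable {c K : ℝ}

theorem max_le_add_sqrt (hK : 0 ≤ K) : max (2 * c) 0 ≤ c + √(c ^ 2 + K) := by
  have : |c| ≤ √(c ^ 2 + K) := Real.abs_le_sqrt (by linarith)
  exact max_le (by linarith [le_abs_self c]) (by linarith [neg_abs_le c])

theorem rayArea_nonneg (hK : 0 ≤ K) : 0 ≤ rayArea c K := by
  have h := max_le_add_sqrt (c := c) hK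
  have h0 : 0 ≤ max (2 * c) 0 := le_max_right _ _
  unfold rayArea
  nlinarith

/-- Power of a point: the outer circle cuts the line through the origin at distances `√(c² + K) ± c`
from it, whose product is `K`. -/
theorem rayArea_add_rayArea_neg (hK : 0 ≤ K) : rayArea c K + rayArea (-c) K = K := by
  have hs : √(c ^ 2 + K) ^ 2 = c ^ 2 + K := Real.sq_sqrt (by positivity)
  unfold rayArea
  rw [neg_sq]
  rcases le_total 0 c with hc | hc
  · rw [max_eq_left (by linarith), max_eq_right (by linarith)]
    linear_combination hs
  · rw [max_eq_right (by linarith), max_eq_left (by linarith)]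
    linear_combination hs

end rayArea

theorem norm_smul_sub_mem_Icc_iff {E : Type*} [NormedAddCommGroup E] [InnerProductSpace ℝ E]
    {u w : E} {r R t : ℝ} (hu : ‖u‖ = 1) (hw : ‖w‖ = r) (hrR : r ≤ R) (ht : 0 < t) :
    ‖t • u - w‖ ∈ Icc r R ↔
      t ∈ Icc (2 * ⟪u, w⟫) (⟪u, w⟫ + √(⟪u, w⟫ ^ 2 + (R ^ 2 - r ^ 2))) := by
  set c := ⟪u, w⟫
  set s := √(c ^ 2 + (R ^ 2 - r ^ 2))
  have hr : 0 ≤ r := hw ▸ norm_nonneg w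
  have hs0 : 0 ≤ s := Real.sqrt_nonneg _
  have hs : s ^ 2 = c ^ 2 + (R ^ 2 - r ^ 2) := Real.sq_sqrt (by nlinarith)
  have hsq : ‖t • u - w‖ ^ 2 = t ^ 2 - 2 * t * c + r ^ 2 := by
    rw [norm_sub_sq_real, norm_smul, hu, hw, inner_smul_left, Real.norm_eq_abs, abs_of_pos ht]
    simp only [conj_trivial]
    ring
  have hnorm := norm_nonneg (t • u - w)
  simp only [mem_Icc]
  constructor
  · rintro ⟨h1, h2⟩
    have e1 : r ^ 2 ≤ ‖t • u - w‖ ^ 2 := pow_le_pow_left₀ hr h1 2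
    have e2 : ‖t • u - w‖ ^ 2 ≤ R ^ 2 := pow_le_pow_left₀ hnorm h2 2
    constructor <;> nlinarith
  · rintro ⟨h1, h2⟩
    have e1 : r ^ 2 ≤ ‖t • u - w‖ ^ 2 := by nlinarith
    have e2 : ‖t • u - w‖ ^ 2 ≤ R ^ 2 := by nlinarith
    exact ⟨(pow_le_pow_iff_left₀ hr hnorm two_ne_zero).1 e1,
      (pow_le_pow_iff_left₀ hnorm (by linarith) two_ne_zero).1 e2⟩

theorem setLIntegral_Ioi_indicator_Icc_ofReal {a b : ℝ} (hab : max a 0 ≤ b) :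
    ∫⁻ t in Ioi 0, (Icc a b).indicator ENNReal.ofReal t =
      ENNReal.ofReal ((b ^ 2 - max a 0 ^ 2) / 2) := by
  have hset : (Icc a b ∩ Ioi 0 : Set ℝ) =ᵐ[volume] Ioc (max a 0) b := by
    have : Icc a b ∩ Ioi 0 = (Ici a ∩ Ioi 0) ∩ Iic b := by
      ext; simp only [mem_inter_iff, mem_Icc, mem_Ici, mem_Iic]; tauto
    rw [this, ← Ioi_inter_Iic, ← Ioi_inter_Ioi]
    exact (Ioi_ae_eq_Ici.symm.inter .rfl).inter .rfl
  have hnonneg : ∀ᵐ t ∂volume.restrict (Ioc (max a 0) b), 0 ≤ t :=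
    (ae_restrict_iff' measurableSet_Ioc).2 <| .of_forall fun t ht =>
      (le_max_right a 0).trans ht.1.le
  rw [lintegral_indicator measurableSet_Icc, Measure.restrict_restrict measurableSet_Icc,
    Measure.restrict_congr_set hset, ← ofReal_integral_eq_lintegral_ofReal (f := fun t => t)
      (continuous_id.integrableOn_Icc.mono_set Ioc_subset_Icc_self) hnonneg,
    ← intervalIntegral.integral_of_le hab, integral_id]

theorem mem_closedBall_diff_ball_iff {E : Type*} [SeminormedAddCommGroup E] {z w : E} {r R : ℝ} :
    z ∈ closedBall w R \ ball w r ↔ ‖z - w‖ ∈ Icc r R := by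
  rw [mem_sdiff, mem_closedBall, mem_ball, dist_eq_norm, not_lt, mem_Icc, and_comm]

theorem volume_annulus_inter_angularSector {w : ℂ} {r R α β : ℝ} (hw : ‖w‖ = r) (hrR : r ≤ R)
    (hα : -π ≤ α) (hβ : β ≤ π) :
    volume ((closedBall w R \ ball w r) ∩ angularSector 0 α β) =
      ∫⁻ φ in Icc α β,
        ENNReal.ofReal (rayArea ⟪Complex.exp (φ * Complex.I), w⟫ (R ^ 2 - r ^ 2)) := by
  set A := (closedBall w R \ ball w r) ∩ angularSector 0 α β
  set c : ℝ → ℝ := fun φ => ⟪Complex.exp (φ * Complex.I), w⟫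
  set K := R ^ 2 - r ^ 2
  have hK : 0 ≤ K := by nlinarith [hw ▸ norm_nonneg w]
  have hA : MeasurableSet A :=
    (measurableSet_closedBall.diff measurableSet_ball).inter (measurableSet_angularSector 0 α β)
  have hmem : ∀ t ∈ Ioi (0 : ℝ), ∀ φ ∈ Ioo (-π) π, Complex.polarCoord.symm (t, φ) ∈ A ↔
      φ ∈ Icc α β ∧ t ∈ Icc (2 * c φ) (c φ + √(c φ ^ 2 + K)) := fun t ht φ hφ => by
    rw [mem_inter_iff, polarCoord_symm_mem_angularSector_iff ⟨ht, hφ⟩ hα hβ, and_comm,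
      mem_closedBall_diff_ball_iff, Complex.polarCoord_symm_eq_ofReal_mul_exp, ← Complex.real_smul,
      norm_smul_sub_mem_Icc_iff (by simp) hw hrR ht]
  have hslice : ∀ φ ∈ Ioo (-π) π,
      ∫⁻ t in Ioi 0, ENNReal.ofReal t • A.indicator 1 (Complex.polarCoord.symm (t, φ)) =
        (Icc α β).indicator (fun φ => ENNReal.ofReal (rayArea (c φ) K)) φ := fun φ hφ => by
    by_cases hφα : φ ∈ Icc α β
    · rw [indicator_of_mem hφα, rayArea,
        ← setLIntegral_Ioi_indicator_Icc_ofReal (max_le_add_sqrt hK)]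
      refine setLIntegral_congr_fun measurableSet_Ioi fun t ht => ?_
      by_cases htc : t ∈ Icc (2 * c φ) (c φ + √(c φ ^ 2 + K))
      · rw [indicator_of_mem ((hmem t ht φ hφ).2 ⟨hφα, htc⟩), indicator_of_mem htc, Pi.one_apply,
          smul_eq_mul, mul_one]
      · rw [indicator_of_notMem (fun h => htc ((hmem t ht φ hφ).1 h).2), indicator_of_notMem htc,
          smul_zero]
    · rw [indicator_of_notMem hφα]
      refine (setLIntegral_congr_fun measurableSet_Ioi fun t ht => ?_).trans lintegral_zero
      rw [indicator_of_notMem (fun h => hφα ((hmem t ht φ hφ).1 h).1), smul_zero]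
  calc volume A = ∫⁻ z, A.indicator 1 z := (lintegral_indicator_one hA).symm
    _ = ∫⁻ p in polarCoord.target, ENNReal.ofReal p.1 • A.indicator 1 (Complex.polarCoord.symm p) :=
      (Complex.lintegral_comp_polarCoord_symm _).symm
    _ = ∫⁻ φ in Ioo (-π) π, ∫⁻ t in Ioi 0,
          ENNReal.ofReal t • A.indicator 1 (Complex.polarCoord.symm (t, φ)) := by
      rw [polarCoord_target, Measure.volume_eq_prod, ← Measure.prod_restrict, lintegral_prod_symm]
      exact (measurable_fst.ennreal_ofReal.smul ((measurable_const.indicator hA).comp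
        (Complex.measurableEquivRealProd.symm.measurable.comp
          continuous_polarCoord_symm.measurable))).aemeasurable
    _ = ∫⁻ φ in Ioo (-π) π, (Icc α β).indicator (fun φ => ENNReal.ofReal (rayArea (c φ) K)) φ :=
      setLIntegral_congr_fun measurableSet_Ioo hslice
    _ = ∫⁻ φ in Icc α β, ENNReal.ofReal (rayArea (c φ) K) := by
      rw [lintegral_indicator measurableSet_Icc, Measure.restrict_restrict measurableSet_Icc]
      exact setLIntegral_congr ((Filter.EventuallyEq.rfl.inter Ioo_ae_eq_Icc).trans
        (.of_eq (inter_eq_left.2 (Icc_subset_Icc hα hβ))))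

theorem volume_annulus_inter_opposite_angularSectors {w : ℂ} {r R δ : ℝ} (hw : ‖w‖ = r)
    (hrR : r ≤ R) (hδ : 0 ≤ δ) (hδπ : δ ≤ π) :
    volume ((closedBall w R \ ball w r) ∩ angularSector 0 (-π) (-π + δ)) +
        volume ((closedBall w R \ ball w r) ∩ angularSector 0 0 δ) =
      ENNReal.ofReal (δ * (R ^ 2 - r ^ 2)) := by
  rw [volume_annulus_inter_angularSector hw hrR le_rfl (by linarith),
    volume_annulus_inter_angularSector hw hrR (by linarith [pi_pos]) hδπ]
  set K := R ^ 2 - r ^ 2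
  have hK : 0 ≤ K := by nlinarith [hw ▸ norm_nonneg w]
  set g : ℝ → ℝ≥0∞ := fun φ => ENNReal.ofReal (rayArea ⟪Complex.exp (φ * Complex.I), w⟫ K)
  have hg : Measurable g := by
    unfold g rayArea
    fun_prop
  have hshift : ∫⁻ φ in Icc 0 δ, g φ = ∫⁻ φ in Icc (-π) (-π + δ), g (φ + π) := by
    rw [← (measurePreserving_add_right volume π).setLIntegral_comp_preimage_emb
      (measurableEmbedding_addRight π), preimage_add_const_Icc, zero_sub, sub_eq_neg_add]
  have hpair : ∀ φ, g φ + g (φ + π) = ENNReal.ofReal K := fun φ => by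
    simp only [g, Complex.ofReal_add, add_mul, Complex.exp_add_pi_mul_I, inner_neg_left]
    rw [← ENNReal.ofReal_add (rayArea_nonneg hK) (rayArea_nonneg hK), rayArea_add_rayArea_neg hK]
  rw [hshift,
    ← lintegral_add_left' hg.aemeasurable, funext hpair, setLIntegral_const, Real.volume_Icc,
    ← ENNReal.ofReal_mul hK]
  congr 1
  ring

theorem measurePreserving_exp_mul_sub (β : ℝ) (P : ℂ) :
    MeasurePreserving (fun z => Complex.exp (β * Complex.I) * (z - P)) :=
  (rotation (Circle.exp β)).measurePreserving.comp (measurePreserving_sub_right volume P)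

theorem isometry_exp_mul_sub (β : ℝ) (P : ℂ) :
    Isometry (fun z => Complex.exp (β * Complex.I) * (z - P)) :=
  (rotation (Circle.exp β)).isometry.comp (IsometryEquiv.subRight P).isometry

theorem volume_annulus_inter_opposite_angularSectors_of_dist_eq {O P : ℂ} {r R a δ : ℝ}
    (hP : dist O P = r) (hrR : r ≤ R) (hδ : 0 ≤ δ) (hδπ : δ ≤ π) :
    volume ((closedBall O R \ ball O r) ∩ angularSector P a (a + δ)) +
        volume ((closedBall O R \ ball O r) ∩ angularSector P (a + π) (a + π + δ)) =
      ENNReal.ofReal (δ * (R ^ 2 - r ^ 2)) := by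
  set f : ℂ → ℂ := fun z => Complex.exp (↑(-π - a) * Complex.I) * (z - P)
  have hann : f ⁻¹' (closedBall (f O) R \ ball (f O) r) = closedBall O R \ ball O r := by
    rw [preimage_sdiff, (isometry_exp_mul_sub (-π - a) P).preimage_closedBall,
      (isometry_exp_mul_sub (-π - a) P).preimage_ball]
  have hsector₁ : f ⁻¹' angularSector 0 (-π) (-π + δ) = angularSector P a (a + δ) := by
    rw [← preimage_exp_mul_sub_angularSector P a (a + δ) (-π - a)]
    congr 2 <;> ring
  have hsector₂ : f ⁻¹' angularSector 0 0 δ = angularSector P (a + π) (a + π + δ) := by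
    rw [← preimage_exp_mul_sub_angularSector P (a + π) (a + π + δ) (-π - a)]
    congr 2 <;> ring
  have hfO : ‖f O‖ = r := by
    rw [norm_mul, Complex.norm_exp_ofReal_mul_I, one_mul, ← dist_eq_norm, hP]
  have hmeas : ∀ b c, MeasurableSet ((closedBall (f O) R \ ball (f O) r) ∩ angularSector 0 b c) :=
    fun b c => (measurableSet_closedBall.diff measurableSet_ball).inter
      (measurableSet_angularSector 0 b c)
  have hf := measurePreserving_exp_mul_sub (-π - a) P
  rw [← hann, ← hsector₁, ← hsector₂, ← preimage_inter, ← preimage_inter,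
    hf.measure_preimage (hmeas _ _).nullMeasurableSet,
    hf.measure_preimage (hmeas _ _).nullMeasurableSet]
  exact volume_annulus_inter_opposite_angularSectors hfO hrR hδ hδπ

theorem baumkuchen_stmt7_general
    (O P : ℂ) (R r : ℝ) (hrR : r < R)
    (hP : dist O P = r)
    (n : ℕ) (θ : ℝ) :
    ∀ k : ℕ, 1 ≤ k → k ≤ n →
      volume ((Metric.closedBall O R \ interior (Metric.closedBall O r)) ∩
          angularSector P (θ + ((k - 1 : ℕ) : ℝ) * π / n) (θ + (k : ℝ) * π / n)) +
      volume ((Metric.closedBall O R \ interior (Metric.closedBall O r)) ∩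
          angularSector P (θ + ((k + n - 1 : ℕ) : ℝ) * π / n) (θ + ((k + n : ℕ) : ℝ) * π / n)) =
      ENNReal.ofReal (1 / n * (π * (R ^ 2 - r ^ 2))) := by
  intro k hk1 hkn
  have hn : (1 : ℝ) ≤ n := Nat.one_le_cast.2 (by omega)
  have hδπ : π / n ≤ π := div_le_self pi_pos.le hn
  rw [interior_closedBall',
    show 1 / (n : ℝ) * (π * (R ^ 2 - r ^ 2)) = π / n * (R ^ 2 - r ^ 2) by ring]
  convert volume_annulus_inter_opposite_angularSectors_of_dist_eq
    (a := θ + ((k - 1 : ℕ) : ℝ) * π / n) hP hrR.le (by positivity) hδπ using 5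
  all_goals
    push_cast [Nat.cast_sub hk1, Nat.cast_sub (by omega : 1 ≤ k + n)]
    field_simp
    ring

/-- Annulus lemma for a boundary point: `B = D \ int(D̃)` the annulus between concentric
closed disks of radii `R > r > 0` about `O`; `P` on the boundary circle of `D̃` (`dist(O,P) = r`); `n ≥ 4` even.  The `n` lines
through `P` at angles `θ + jπ/n` cut `B` into `2n` pieces, `Piece(j)` being `B`
intersected with the sector at `P` of angles `[θ + (j−1)π/n, θ + jπ/n]`.  Then for each
`1 ≤ k ≤ n` the areas of `Piece(k)` and `Piece(k+n)` sum to `(1/n)·π(R² − r²)`. -/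
theorem baumkuchen_stmt7
    (O P : ℂ) (R r : ℝ) (hr : 0 < r) (hrR : r < R)
    (hP : dist O P = r)
    (n : ℕ) (hn : 4 ≤ n) (hev : Even n) (θ : ℝ) :
    ∀ k : ℕ, 1 ≤ k → k ≤ n →
      volume ((Metric.closedBall O R \ interior (Metric.closedBall O r)) ∩
          angularSector P (θ + ((k - 1 : ℕ) : ℝ) * π / n) (θ + (k : ℝ) * π / n)) +
      volume ((Metric.closedBall O R \ interior (Metric.closedBall O r)) ∩
          angularSector P (θ + ((k + n - 1 : ℕ) : ℝ) * π / n) (θ + ((k + n : ℕ) : ℝ) * π / n)) =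
      ENNReal.ofReal (1 / n * (π * (R ^ 2 - r ^ 2))) :=
  baumkuchen_stmt7_general O P R r hrR hP n θ
end
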